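/- Let u ≥ 3 be an integer and let [n]_{p,q} = Σ_{i=0}^{n−1} p^{n−1−i} q^i. Let J^{(u)} be the infinite tridiagonal matrix with first diagonal entry [u]_{p,q} and all other diagonal entries p+q, with all superdiagonal entries equal to 1, with first subdiagonal entry pq·[u−1]_{p,q} and all subsequent subdiagonal entries pq. Then for every k ≥ 1, the determinant N^{(u)}_k of the k×k leading principal submatrix J^{(u)}[{1,…,k},{1,…,k}] equals [k+u−1]_{p,q}. -/

import Mathlib

/-- A multivariable real polynomial is nonnegative if all of its coefficients
are nonnegative. -/
def PolyNonneg {m : ℕ} (f : MvPolynomial (Fin m) ℝ) : Prop :=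
  ∀ d : Fin m →₀ ℕ, 0 ≤ f.coeff d

/-- An infinite matrix of multivariable real polynomials is totally positive if
every minor has all nonnegative coefficients. -/
def xTP {m : ℕ} (M : ℕ → ℕ → MvPolynomial (Fin m) ℝ) : Prop :=
  ∀ (k : ℕ) (r c : Fin k → ℕ), StrictMono r → StrictMono c →
    PolyNonneg (Matrix.det (Matrix.of fun i j => M (r i) (c j)))

/-- The variable `p` in `ℝ[p,q]`. -/
noncomputable def P : MvPolynomial (Fin 2) ℝ := MvPolynomial.X 0

/-- The variable `q` in `ℝ[p,q]`. -/
noncomputable def Q : MvPolynomial (Fin 2) ℝ := MvPolynomial.X 1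

/-- The `(p,q)`-integer `[n]_{p,q} = p^{n-1} + p^{n-2}q + ⋯ + q^{n-1}
  = Σ_{i=0}^{n-1} p^{n-1-i} q^i`. -/
noncomputable def pqInt (n : ℕ) : MvPolynomial (Fin 2) ℝ :=
  ∑ i ∈ Finset.range n, P ^ (n - 1 - i) * Q ^ i

/-- The tridiagonal coefficient matrix `J⁽ᵘ⁾` of Example 3.4: diagonal
`([u]_{p,q}, p+q, p+q, …)`, superdiagonal `(1, 1, …)`, and subdiagonal
`(pq[u-1]_{p,q}, pq, pq, …)`. -/
noncomputable def Ju (u : ℕ) : ℕ → ℕ → MvPolynomial (Fin 2) ℝ := fun a b =>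
  if a = b then (if a = 0 then pqInt u else P + Q)
  else if b = a + 1 then 1
  else if a = b + 1 then (if b = 0 then P * Q * pqInt (u - 1) else P * Q)
  else 0

/-!
`J⁽ᵘ⁾` is tridiagonal, so expanding along the last row shows that its leading principal minors
satisfy `N_{k+2} = (p+q) N_{k+1} - pq N_k` for `k ≥ 1`. The `(p,q)`-integers satisfy the same
recurrence, `[n+2] = (p+q)[n+1] - pq[n]`, and the initial values match:
`N_1 = [u]` and `N_2 = (p+q)[u] - pq[u-1] = [u+1]`.
-/

open Matrix

section LeadingMinors

variable {R : Type*} [CommRing R]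

theorem Matrix.det_succ_of_castSucc_last_eq_zero {m : ℕ}
    (A : Matrix (Fin (m + 1)) (Fin (m + 1)) R)
    (h : ∀ i : Fin m, A i.castSucc (Fin.last m) = 0) :
    A.det = A (Fin.last m) (Fin.last m) * (A.submatrix Fin.castSucc Fin.castSucc).det := by
  rw [det_succ_column A (Fin.last m), Fin.sum_univ_castSucc]
  simp [h, Fin.succAbove_last]

def leadingMinor (M : ℕ → ℕ → R) (m : ℕ) : R :=
  det (of fun i j : Fin m => M i j)

@[simp]
theorem leadingMinor_zero (M : ℕ → ℕ → R) : leadingMinor M 0 = 1 :=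
  det_isEmpty

@[simp]
theorem leadingMinor_one (M : ℕ → ℕ → R) : leadingMinor M 1 = M 0 0 :=
  det_fin_one _

/-- The three-term recurrence of continuants: expand along the last row, then expand the minor
that drops column `n` along its last column. -/
theorem leadingMinor_add_two (M : ℕ → ℕ → R) (n : ℕ)
    (hrow : ∀ j < n, M (n + 1) j = 0) (hcol : ∀ i < n, M i (n + 1) = 0) :
    leadingMinor M (n + 2) =
      M (n + 1) (n + 1) * leadingMinor M (n + 1) -
        M (n + 1) n * M n (n + 1) * leadingMinor M n := by
  set A := of fun i j : Fin (n + 2) => M i j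
  set B := A.submatrix Fin.castSucc (Fin.last n).castSucc.succAbove
  have hB : B.det = M n (n + 1) * leadingMinor M n := by
    rw [det_succ_of_castSucc_last_eq_zero B fun i => by simpa [B, A] using hcol i i.isLt]
    congr 1
    · simp [B, A]
    · congr 1
      ext i j
      simp [B, A, Fin.succAbove_castSucc_of_lt _ _ j.castSucc_lt_last]
  rw [leadingMinor, det_succ_row A (Fin.last (n + 1)), Fin.sum_univ_castSucc,
    Fin.sum_univ_castSucc]
  simp only [Nat.succ_eq_add_one, Fin.val_last, Fin.val_castSucc, of_apply, Fin.is_lt, hrow,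
    mul_zero, Fin.succAbove_last, zero_mul, Finset.sum_const_zero, odd_add_one_self,
    Odd.neg_one_pow, neg_mul, one_mul, zero_add, Even.add_self, Even.neg_pow, one_pow, A]
  change -(_ * B.det) + _ * leadingMinor M (n + 1) = _
  rw [hB]
  ring

end LeadingMinors

theorem pqInt_succ (n : ℕ) : pqInt (n + 1) = P * pqInt n + Q ^ n := by
  rw [pqInt, Finset.sum_range_succ, pqInt, Finset.mul_sum, Nat.add_sub_cancel, Nat.sub_self,
    pow_zero, one_mul]
  congr 1
  refine Finset.sum_congr rfl fun i hi => ?_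
  have := Finset.mem_range.mp hi
  rw [← mul_assoc, ← pow_succ']
  congr 2
  omega

theorem pqInt_add_two (n : ℕ) :
    pqInt (n + 2) = (P + Q) * pqInt (n + 1) - P * Q * pqInt n := by
  linear_combination pqInt_succ (n + 1) - Q * pqInt_succ n

section Ju

variable (u : ℕ)

theorem Ju_zero_zero : Ju u 0 0 = pqInt u := by
  simp [Ju]

theorem Ju_succ_succ (n : ℕ) : Ju u (n + 1) (n + 1) = P + Q := by
  simp [Ju]

theorem Ju_self_succ (n : ℕ) : Ju u n (n + 1) = 1 := by
  simp [Ju]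

theorem Ju_one_zero : Ju u 1 0 = P * Q * pqInt (u - 1) := by
  simp [Ju]

theorem Ju_add_two_succ (n : ℕ) : Ju u (n + 2) (n + 1) = P * Q := by
  simp [Ju]

theorem Ju_eq_zero {a b : ℕ} (h : a + 1 < b ∨ b + 1 < a) : Ju u a b = 0 := by
  simp only [Ju]
  split_ifs <;> first | rfl | omega

theorem leadingMinor_Ju_add_two (n : ℕ) :
    leadingMinor (Ju u) (n + 2) =
      Ju u (n + 1) (n + 1) * leadingMinor (Ju u) (n + 1) -
        Ju u (n + 1) n * leadingMinor (Ju u) n := by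
  rw [leadingMinor_add_two _ _ (fun j hj => Ju_eq_zero u (by omega))
    (fun i hi => Ju_eq_zero u (by omega)), Ju_self_succ, mul_one]

theorem leadingMinor_Ju_succ (hu : 1 ≤ u) (n : ℕ) :
    leadingMinor (Ju u) (n + 1) = pqInt (u + n) := by
  induction n using Nat.twoStepInduction with
  | zero => simp [Ju_zero_zero]
  | one =>
    obtain ⟨v, rfl⟩ : ∃ v, u = v + 1 := ⟨u - 1, by omega⟩
    rw [leadingMinor_Ju_add_two _ 0, Ju_succ_succ, Ju_one_zero, pqInt_add_two]
    simp [Ju_zero_zero]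
  | more n ih₀ ih₁ =>
    rw [leadingMinor_Ju_add_two, Ju_succ_succ, Ju_add_two_succ, ih₀, ih₁]
    simp only [← add_assoc, pqInt_add_two]

end Ju

/-- In Example 3.4: for `u ≥ 3`, the determinant of the `k × k` leading
principal submatrix of `J⁽ᵘ⁾` equals the `(p,q)`-integer `[k + u - 1]_{p,q}`. -/
theorem example34_leading_principal_minors
    (u : ℕ) (hu : 3 ≤ u) (k : ℕ) (hk : 1 ≤ k) :
    Matrix.det (Matrix.of fun i j : Fin k => Ju u (i : ℕ) (j : ℕ)) =
      pqInt (k + u - 1) := by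
  obtain ⟨n, rfl⟩ : ∃ n, k = n + 1 := ⟨k - 1, by omega⟩
  rw [show n + 1 + u - 1 = u + n by omega]
  exact leadingMinor_Ju_succ u (by omega) n
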